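/- arXiv:1012.3279 — 2 statements merged into one kernel-verified Lean document; each statement's English description precedes it below -/
import Mathlib

section
/- Let R be a commutative ring, A a commutative R-algebra, and P = (A ⊗_R A)/I² the first infinitesimal neighborhood of the diagonal, with the two A-algebra structures p_1, p_2 : A → P. Given an A-module M, a P-linear isomorphism ε : P ⊗_{p_2, A} M ≅ M ⊗_{A, p_1} P whose reduction modulo I/I² is the identity of M determines an R-linear connection ∇ : M → M ⊗_A Ω_{A/R} satisfying the Leibniz rule ∇(a·m) = a·∇(m) + m ⊗ da; the connection is defined as the difference between the map m ↦ ε(1 ⊗ m) and the canonical inclusion m ↦ m ⊗ 1, landing in M ⊗_A I/I² = M ⊗_A Ω_{A/R}. -/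
/-!
The projection `P → A` induced by multiplication is split `A`-linearly by `p₁`, with
complementary retraction `P → I/I² = Ω[A⁄R]`, `a ⊗ b ↦ a db`. Hence `kappa : M ⊗ Ω → P ⊗ M`
is split injective, and `∇ m := kappa⁻¹ (ε(1 ⊗ m) - 1 ⊗ m)` is well defined and additive.
The Leibniz rule comes from `p₂ a = p₁ a + da` in `P`, the `P`-linearity of `ε`, and
`(I/I²)² = 0` in `P`, which makes `p₂ a` and `p₁ a` act alike on the image of `kappa`.
-/
open TensorProduct

noncomputable section

variable (R A : Type u) [CommRing R] [CommRing A] [Algebra R A]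

/-- The first infinitesimal neighbourhood `P = (A ⊗[R] A)/I²` of the diagonal, where `I`
is the kernel of the multiplication map `A ⊗[R] A → A`. -/
abbrev InfNbhd := (A ⊗[R] A) ⧸ (KaehlerDifferential.ideal R A ^ 2)

/-- The second `A`-algebra structure map `p₂ : A → P` (the first one, `p₁`, is the
canonical `algebraMap A P` through the left tensor factor). -/
def p2 : A →+* InfNbhd R A :=
  (Ideal.Quotient.mk (KaehlerDifferential.ideal R A ^ 2)).comp
    (Algebra.TensorProduct.includeRight.toRingHom)

/-- Type synonym for `P` viewed as an `A`-algebra via `p₂`. -/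
def InfR := InfNbhd R A

instance : CommRing (InfR R A) := inferInstanceAs (CommRing (InfNbhd R A))
instance : Algebra A (InfR R A) := (p2 R A).toAlgebra
instance : Module (InfNbhd R A) (InfR R A) :=
  inferInstanceAs (Module (InfNbhd R A) (InfNbhd R A))
instance : SMulCommClass A (InfNbhd R A) (InfR R A) :=
  ⟨fun a p x => mul_left_comm (p2 R A a) p x⟩

/-- The inclusion `Ω[A⁄R] = I/I² → P`. -/
def jmap : Ω[A⁄R] →ₗ[A] InfNbhd R A where
  toFun w := (KaehlerDifferential.ideal R A).cotangentToQuotientSquare w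
  map_add' x y := map_add _ x y
  map_smul' a w := by
    simp only [RingHom.id_apply]
    rw [← algebraMap_smul (A ⊗[R] A) a w]
    erw [map_smul]
    rw [algebraMap_smul]

variable (M : Type u) [AddCommGroup M] [Module A M]

/-- The canonical embedding `M ⊗[A] Ω[A⁄R] → P ⊗[A] M` induced by `Ω = I/I² ⊆ P`
(together with the symmetry of the tensor product). -/
def kappa : M ⊗[A] Ω[A⁄R] →ₗ[A] InfNbhd R A ⊗[A] M :=
  (LinearMap.rTensor M (jmap R A)).comp (TensorProduct.comm A M (Ω[A⁄R])).toLinearMap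

variable {R A} in
lemma Derivation.tensorProductTo_eq_zero_of_mem_sq {N : Type*} [AddCommGroup N] [Module A N]
    [Module R N] [IsScalarTower R A N] (D : Derivation R A N) {x : A ⊗[R] A}
    (hx : x ∈ KaehlerDifferential.ideal R A ^ 2) : D.tensorProductTo x = 0 := by
  rw [pow_two] at hx
  refine Submodule.mul_induction_on hx (fun y hy z hz => ?_) (fun y z hy hz => ?_)
  · rw [Derivation.tensorProductTo_mul, RingHom.mem_ker.mp hy, RingHom.mem_ker.mp hz,
      zero_smul, zero_smul, add_zero]
  · rw [map_add, hy, hz, add_zero]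

namespace InfNbhd

def toKaehler : InfNbhd R A →ₗ[A] Ω[A⁄R] :=
  (((KaehlerDifferential.ideal R A ^ 2).restrictScalars A).liftQ
      (KaehlerDifferential.D R A).tensorProductTo fun _ hx ↦
        (KaehlerDifferential.D R A).tensorProductTo_eq_zero_of_mem_sq
          ((Submodule.restrictScalars_mem _ _ _).mp hx)).comp
    (Submodule.Quotient.restrictScalarsEquiv A (KaehlerDifferential.ideal R A ^ 2)).symm.toLinearMap

lemma toKaehler_jmap (w : Ω[A⁄R]) : toKaehler R A (jmap R A w) = w := by
  obtain ⟨x, rfl⟩ := (KaehlerDifferential.ideal R A).toCotangent_surjective w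
  exact KaehlerDifferential.D_tensorProductTo x

lemma jmap_mul_jmap (w w' : Ω[A⁄R]) : jmap R A w * jmap R A w' = 0 := by
  obtain ⟨x, rfl⟩ := (KaehlerDifferential.ideal R A).toCotangent_surjective w
  obtain ⟨y, rfl⟩ := (KaehlerDifferential.ideal R A).toCotangent_surjective w'
  change Ideal.Quotient.mk _ (x * y : A ⊗[R] A) = 0
  exact Ideal.Quotient.eq_zero_iff_mem.mpr (pow_two (KaehlerDifferential.ideal R A) ▸
    Ideal.mul_mem_mul x.2 y.2)

lemma p2_eq_algebraMap_add_jmap (a : A) :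
    p2 R A a = algebraMap A (InfNbhd R A) a + jmap R A (KaehlerDifferential.D R A a) := by
  change _ = Ideal.Quotient.mk _ (a ⊗ₜ[R] 1) + Ideal.Quotient.mk _ (1 ⊗ₜ[R] a - a ⊗ₜ[R] 1)
  rw [← map_add, add_sub_cancel]
  rfl

end InfNbhd

open InfNbhd

def kappaRetraction : InfNbhd R A ⊗[A] M →ₗ[A] M ⊗[A] Ω[A⁄R] :=
  (TensorProduct.comm A (Ω[A⁄R]) M).toLinearMap ∘ₗ LinearMap.rTensor M (toKaehler R A)

lemma kappaRetraction_kappa (u : M ⊗[A] Ω[A⁄R]) :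
    kappaRetraction R A M (kappa R A M u) = u := by
  induction u using TensorProduct.induction_on with
  | zero => simp
  | tmul m w =>
    simp [kappaRetraction, kappa, toKaehler_jmap]
  | add x y hx hy => rw [map_add, map_add, hx, hy]

lemma kappa_kappaRetraction {x : InfNbhd R A ⊗[A] M}
    (hx : x ∈ LinearMap.range (kappa R A M)) :
    kappa R A M (kappaRetraction R A M x) = x := by
  obtain ⟨u, rfl⟩ := hx
  rw [kappaRetraction_kappa]

lemma jmap_smul_kappa (w : Ω[A⁄R]) (u : M ⊗[A] Ω[A⁄R]) :
    jmap R A w • kappa R A M u = 0 := by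
  induction u using TensorProduct.induction_on with
  | zero => rw [map_zero, smul_zero]
  | tmul m w' =>
    change jmap R A w • (jmap R A w' ⊗ₜ[A] m) = 0
    rw [TensorProduct.smul_tmul', smul_eq_mul, jmap_mul_jmap, TensorProduct.zero_tmul]
  | add x y hx hy => rw [map_add, smul_add, hx, hy, add_zero]

lemma p2_smul_kappa (a : A) (u : M ⊗[A] Ω[A⁄R]) :
    p2 R A a • kappa R A M u = kappa R A M (a • u) := by
  rw [p2_eq_algebraMap_add_jmap, add_smul, jmap_smul_kappa, add_zero, algebraMap_smul, map_smul]

lemma p2_smul_one_tmul (a : A) (m : M) :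
    p2 R A a • ((1 : InfNbhd R A) ⊗ₜ[A] m) =
      (1 : InfNbhd R A) ⊗ₜ[A] (a • m) + kappa R A M (m ⊗ₜ[A] KaehlerDifferential.D R A a) := by
  rw [p2_eq_algebraMap_add_jmap, add_smul, algebraMap_smul, ← TensorProduct.tmul_smul,
    TensorProduct.smul_tmul', smul_eq_mul, mul_one]
  rfl

section Stratification

variable {R A M}
variable (ε : InfR R A ⊗[A] M ≃ₗ[InfNbhd R A] InfNbhd R A ⊗[A] M)

def stratificationConnection : M →+ M ⊗[A] Ω[A⁄R] :=
  (kappaRetraction R A M).toAddMonoidHom.comp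
    ((ε : InfR R A ⊗[A] M →+ InfNbhd R A ⊗[A] M).comp
        (TensorProduct.mk A (InfR R A) M 1).toAddMonoidHom -
      (TensorProduct.mk A (InfNbhd R A) M 1).toAddMonoidHom)

lemma stratificationConnection_eq {m : M} {u : M ⊗[A] Ω[A⁄R]}
    (h : ε ((1 : InfR R A) ⊗ₜ[A] m) = (1 : InfNbhd R A) ⊗ₜ[A] m + kappa R A M u) :
    stratificationConnection ε m = u := by
  simp [stratificationConnection, h, kappaRetraction_kappa]

lemma apply_one_tmul_eq_add_kappa
    {m : M} (hm : ε ((1 : InfR R A) ⊗ₜ[A] m) - (1 : InfNbhd R A) ⊗ₜ[A] m ∈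
      LinearMap.range (kappa R A M)) :
    ε ((1 : InfR R A) ⊗ₜ[A] m) =
      (1 : InfNbhd R A) ⊗ₜ[A] m + kappa R A M (stratificationConnection ε m) := by
  simp only [stratificationConnection, AddMonoidHom.coe_comp, Function.comp_apply,
    AddMonoidHom.sub_apply, LinearMap.toAddMonoidHom_coe, TensorProduct.mk_apply,
    AddMonoidHom.coe_coe, kappa_kappaRetraction R A M hm, add_sub_cancel]

lemma stratificationConnection_smul
    {m : M} (hm : ε ((1 : InfR R A) ⊗ₜ[A] m) - (1 : InfNbhd R A) ⊗ₜ[A] m ∈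
      LinearMap.range (kappa R A M)) (a : A) :
    stratificationConnection ε (a • m) =
      a • stratificationConnection ε m + m ⊗ₜ[A] KaehlerDifferential.D R A a := by
  apply stratificationConnection_eq
  have one_tmul_smul :
      (1 : InfR R A) ⊗ₜ[A] (a • m) = p2 R A a • (1 : InfR R A) ⊗ₜ[A] m := by
    rw [TensorProduct.tmul_smul, TensorProduct.smul_tmul', TensorProduct.smul_tmul']
    congr 1
  rw [one_tmul_smul, map_smul, apply_one_tmul_eq_add_kappa ε hm, smul_add, p2_smul_one_tmul,
    p2_smul_kappa, map_add, add_assoc, add_comm (kappa R A M _)]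

end Stratification

/-- A `1`-stratification on an `A`-module `M` is a `P`-linear isomorphism
`ε : P ⊗_{p₂,A} M ≅ M ⊗_{A,p₁} P` (the right-hand side written here, via the symmetry of
the tensor product, as `P ⊗_{p₁,A} M`) whose reduction modulo `I/I²` is the identity of
`M` (equivalently, `ε(1 ⊗ m) − 1 ⊗ m` lies in the image of `M ⊗ Ω[A⁄R] = M ⊗ I/I²`).
Such an `ε` determines an `R`-linear connection `∇ : M → M ⊗[A] Ω[A⁄R]` satisfying the
Leibniz rule `∇(a·m) = a·∇(m) + m ⊗ da`, defined as the difference between `m ↦ ε(1 ⊗ m)`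
and the canonical inclusion `m ↦ m ⊗ 1`. -/
theorem stmt9 (R A : Type u) [CommRing R] [CommRing A] [Algebra R A]
    (M : Type u) [AddCommGroup M] [Module A M]
    (ε : (InfR R A ⊗[A] M) ≃ₗ[InfNbhd R A] (InfNbhd R A ⊗[A] M))
    (hred : ∀ m : M,
      ε ((1 : InfR R A) ⊗ₜ[A] m) - (1 : InfNbhd R A) ⊗ₜ[A] m ∈
        LinearMap.range (kappa R A M)) :
    ∃ D : M →+ M ⊗[A] Ω[A⁄R],
      (∀ (a : A) (m : M),
        D (a • m) = a • D m + m ⊗ₜ[A] KaehlerDifferential.D R A a) ∧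
      ∀ m : M, ε ((1 : InfR R A) ⊗ₜ[A] m) =
        (1 : InfNbhd R A) ⊗ₜ[A] m + kappa R A M (D m) :=
  ⟨stratificationConnection ε, fun a m ↦ stratificationConnection_smul ε (hred m) a,
    fun m ↦ apply_one_tmul_eq_add_kappa ε (hred m)⟩

end
end

section
/- Let R = ℚ⟨t,∂⟩/(∂t − t∂ − 1) be the first Weyl algebra over ℚ. In the following commutative diagram of left R-module maps, both rows are exact: 0 → R →(right mult. by ∂) R →(P ↦ P(1)) ℚ[t] → 0, and 0 → R →(right mult. by t∂+1) R →(P ↦ P(1/t)) ℚ[t, t^{-1}] → 0, where the vertical maps are the identity on the first terms, right multiplication by t on the middle terms, and the inclusion ℚ[t] ⊆ ℚ[t,t^{-1}] on the last terms. Consequently the snake lemma yields an isomorphism of left R-modules R/R·t ≅ ℚ[t,t^{-1}]/ℚ[t]. -/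
set_option maxHeartbeats 1000000
set_option synthInstance.maxHeartbeats 400000

noncomputable section

open LaurentPolynomial

/-- Multiplication by `t` on `ℚ[t,t⁻¹]`. -/
def mulT : Module.End ℚ (LaurentPolynomial ℚ) := LinearMap.mulLeft ℚ (T 1)

/-- The derivation `d/dt` on `ℚ[t,t⁻¹]`, sending `tⁿ` to `n·tⁿ⁻¹` for all `n ∈ ℤ`. -/
def lderiv : Module.End ℚ (LaurentPolynomial ℚ) :=
  (Finsupp.lsum ℚ fun n : ℤ =>
    LinearMap.toSpanSingleton ℚ (LaurentPolynomial ℚ) ((n : ℚ) • T (n - 1))) ∘ₗ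
    (AddMonoidAlgebra.coeffLinearEquiv (S := ℚ) (M := ℤ) ℚ).toLinearMap

/-- The first Weyl algebra `R = ℚ⟨t,∂⟩/(∂t − t∂ − 1)`, realised faithfully as the
subalgebra of `ℚ`-linear endomorphisms of `ℚ[t,t⁻¹]` generated by multiplication by `t`
and differentiation. -/
def WeylL : Type _ := Algebra.adjoin ℚ {mulT, lderiv}

instance : Ring WeylL := inferInstanceAs (Ring (Algebra.adjoin ℚ {mulT, lderiv}))
instance : Algebra ℚ WeylL := inferInstanceAs (Algebra ℚ (Algebra.adjoin ℚ {mulT, lderiv}))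

/-- The tautological representation of the Weyl algebra on `ℚ[t,t⁻¹]`. -/
def toEndL : WeylL →+* Module.End ℚ (LaurentPolynomial ℚ) :=
  ((Algebra.adjoin ℚ {mulT, lderiv}).val.toRingHom :
    WeylL →+* Module.End ℚ (LaurentPolynomial ℚ))

/-- `ℚ[t,t⁻¹]` is a left module over the Weyl algebra. -/
instance : Module WeylL (LaurentPolynomial ℚ) :=
  Module.compHom (LaurentPolynomial ℚ) toEndL

/-- The element `t` of the Weyl algebra. -/
def tL : WeylL := ⟨mulT, Algebra.subset_adjoin (Set.mem_insert _ _)⟩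

/-- The element `∂` of the Weyl algebra. -/
def dL : WeylL := ⟨lderiv, Algebra.subset_adjoin (Set.mem_insert_of_mem _ rfl)⟩

/-!
Every element of `WeylL` is a `ℚ`-linear combination of monomials `t^i ∂^j`, and `t^i ∂^j` sends
`t^n` to `(n)_j t^(n+i-j)` with `(n)_j` the descending factorial. So along each diagonal the
coefficients of `P(t^n)` are polynomial in `n`, and `P` is determined by its restriction to
`ℚ[t]`; as the images of `∂` and of `t∂+1` contain `ℚ[t]`, both are right regular.

Exactness in the middle of each row comes from explicit `ℚ`-linear sections of the evaluation
maps (`t^n ↦ t^n`, resp. `t^n ↦ t^(n+1)` and `t^(-1-m) ↦ ∂^m / (-1)_m`): modulo `R∂`,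
resp. `R(t∂+1) = R∂t`, every monomial reduces into their image, the second case by
`t^(i+1) ∂^(j+1) ≡ -(j+1) t^i ∂^j`.

The isomorphism is the connecting map of the snake lemma made explicit: `P ↦ P(1/t) mod ℚ[t]` is
onto, and if `P(1/t) = Q(1) = (Qt)(1/t)`, exactness of the second row puts `P - Qt` in `R∂t`,
whence `P ∈ Rt`.
-/

section WeylRelation

variable {A : Type*} [Ring A] {d t : A}

theorem mul_pow_succ_of_mul_eq (h : d * t = t * d + 1) (n : ℕ) :
    d * t ^ (n + 1) = t ^ (n + 1) * d + (n + 1) • t ^ n := by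
  induction n with
  | zero => simpa using h
  | succ n ih =>
    rw [pow_succ t (n + 1), ← mul_assoc, ih, add_mul, mul_assoc, h, smul_mul_assoc, ← pow_succ,
      succ_nsmul _ (n + 1)]
    noncomm_ring

theorem pow_succ_mul_of_mul_eq (h : d * t = t * d + 1) (n : ℕ) :
    d ^ (n + 1) * t = t * d ^ (n + 1) + (n + 1) • d ^ n := by
  induction n with
  | zero => simpa using h
  | succ n ih =>
    rw [pow_succ' d (n + 1), mul_assoc, ih, mul_add, ← mul_assoc, h, mul_smul_comm, ← pow_succ',
      succ_nsmul _ (n + 1)]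
    noncomm_ring

end WeylRelation

theorem descPochhammer_eval_neg_one_ne_zero {R : Type*} [CommRing R] [IsDomain R] [CharZero R]
    (m : ℕ) : (descPochhammer R m).eval (-1) ≠ 0 := by
  rw [descPochhammer_eval_eq_prod_range]
  refine Finset.prod_ne_zero_iff.mpr fun j _ => ?_
  rw [← neg_add', neg_ne_zero, add_comm]
  exact Nat.cast_add_one_ne_zero j

theorem exact_mul_right_of_sub_mem_range {K A M : Type*} [CommRing K] [Ring A] [Algebra K A]
    [AddCommGroup M] [Module K M] {S : Set A} (hS : Submodule.span K S = ⊤) {a : A}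
    {e : A →ₗ[K] M} (s : M →ₗ[K] A) (he : ∀ y, e (y * a) = 0)
    (hs : ∀ x ∈ S, x - s (e x) ∈ LinearMap.range (LinearMap.mulRight K a)) :
    Function.Exact (· * a) e := by
  have hspan : Submodule.span K S ≤
      (LinearMap.range (LinearMap.mulRight K a)).comap (LinearMap.id - s ∘ₗ e) :=
    Submodule.span_le.mpr hs
  intro x
  refine ⟨fun hx => ?_, by rintro ⟨y, rfl⟩; exact he y⟩
  simpa [hx] using hspan (hS ▸ Submodule.mem_top : x ∈ Submodule.span K S)

abbrev laurentBasis : Module.Basis ℤ ℚ (LaurentPolynomial ℚ) := AddMonoidAlgebra.basis ℤ ℚ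

theorem laurentBasis_apply (n : ℤ) : laurentBasis n = T n := rfl

theorem lderiv_T (n : ℤ) : lderiv (T n) = (n : ℚ) • T (n - 1) := by
  simp only [lderiv, LinearMap.comp_apply, LinearEquiv.coe_coe,
    AddMonoidAlgebra.coeffLinearEquiv_apply, T, AddMonoidAlgebra.coeff_single,
    Finsupp.lsum_single, LinearMap.toSpanSingleton_apply, one_smul]

theorem toEndL_injective : Function.Injective toEndL := Subtype.val_injective

theorem toEndL_mul_apply (x y : WeylL) (f : LaurentPolynomial ℚ) :
    toEndL (x * y) f = toEndL x (toEndL y f) := by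
  rw [map_mul, Module.End.mul_apply]

theorem toEndL_tL : toEndL tL = LinearMap.mulLeft ℚ (T 1) := rfl

theorem toEndL_dL : toEndL dL = lderiv := rfl

theorem toEndL_smul (c : ℚ) (x : WeylL) : toEndL (c • x) = c • toEndL x := rfl

theorem dL_mul_tL : dL * tL = tL * dL + 1 := by
  refine toEndL_injective (laurentBasis.ext fun n => ?_)
  rw [laurentBasis_apply, map_add, LinearMap.add_apply, toEndL_mul_apply, toEndL_mul_apply, map_one,
    toEndL_tL, toEndL_dL, LinearMap.mulLeft_apply, LinearMap.mulLeft_apply, Module.End.one_apply,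
    ← T_add, lderiv_T, lderiv_T, mul_smul_comm, ← T_add]
  push_cast
  rw [add_smul, one_smul]
  ring_nf

theorem toEndL_tL_pow (i : ℕ) : toEndL (tL ^ i) = LinearMap.mulLeft ℚ (T i) := by
  rw [map_pow, toEndL_tL, LinearMap.pow_mulLeft, T_pow, mul_one]

theorem toEndL_dL_pow_T (j : ℕ) (n : ℤ) :
    toEndL (dL ^ j) (T n) = (descPochhammer ℚ j).eval (n : ℚ) • T (n - j) := by
  induction j with
  | zero => simp
  | succ j ih =>
    rw [pow_succ', toEndL_mul_apply, ih, map_smul, toEndL_dL, lderiv_T,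
      smul_smul, descPochhammer_succ_eval]
    push_cast
    ring_nf

theorem toEndL_monomial_T (i j : ℕ) (n : ℤ) :
    toEndL (tL ^ i * dL ^ j) (T n) = (descPochhammer ℚ j).eval (n : ℚ) • T (n + (i - j)) := by
  rw [toEndL_mul_apply, toEndL_dL_pow_T, toEndL_tL_pow, map_smul, LinearMap.mulLeft_apply,
    ← T_add]
  ring_nf

theorem adjoin_tL_dL : Algebra.adjoin ℚ {tL, dL} = ⊤ := by
  refine Eq.trans ?_ (Algebra.adjoin_adjoin_coe_preimage (R := ℚ) (s := {mulT, lderiv}))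
  congr 1
  ext x
  simp only [Set.mem_insert_iff, Set.mem_singleton_iff]
  exact or_congr Subtype.ext_iff Subtype.ext_iff

def weylMonomials : Set WeylL := Set.range fun ij : ℕ × ℕ => tL ^ ij.1 * dL ^ ij.2

theorem mul_mem_span_weylMonomials (x : WeylL) {y : WeylL}
    (hy : y ∈ Submodule.span ℚ weylMonomials) : x * y ∈ Submodule.span ℚ weylMonomials := by
  have hx : x ∈ Algebra.adjoin ℚ {tL, dL} := adjoin_tL_dL ▸ Algebra.mem_top
  induction hx using Algebra.adjoin_induction generalizing y with
  | mem g hg =>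
    suffices weylMonomials ⊆ (Submodule.span ℚ weylMonomials).comap (LinearMap.mulLeft ℚ g) from
      Submodule.span_le.mpr this hy
    rintro _ ⟨⟨i, j⟩, rfl⟩
    rcases hg with rfl | rfl
    · exact Submodule.subset_span ⟨(i + 1, j), by simp [pow_succ', mul_assoc]⟩
    · rcases i with _ | i
      · exact Submodule.subset_span ⟨(0, j + 1), by simp [pow_succ']⟩
      · show dL * (tL ^ (i + 1) * dL ^ j) ∈ Submodule.span ℚ weylMonomials
        rw [← mul_assoc, mul_pow_succ_of_mul_eq dL_mul_tL, add_mul, smul_mul_assoc, mul_assoc _ dL,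
          ← pow_succ']
        exact add_mem (Submodule.subset_span ⟨(i + 1, j + 1), rfl⟩)
          (Submodule.smul_of_tower_mem _ _ (Submodule.subset_span ⟨(i, j), rfl⟩))
  | algebraMap c =>
    rw [← Algebra.smul_def]
    exact Submodule.smul_mem _ c hy
  | add x x' _ _ hx hx' => rw [add_mul]; exact add_mem (hx hy) (hx' hy)
  | mul x x' _ _ hx hx' => rw [mul_assoc]; exact hx (hx' hy)

theorem span_weylMonomials : Submodule.span ℚ weylMonomials = ⊤ :=
  Submodule.eq_top_iff'.mpr fun x => by
    simpa using mul_mem_span_weylMonomials x (Submodule.subset_span ⟨(0, 0), mul_one _⟩)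

theorem exists_polynomial_coeff_toEndL_T (x : WeylL) (k : ℤ) :
    ∃ p : Polynomial ℚ, ∀ n : ℤ, (toEndL x (T n)).coeff (n + k) = p.eval (n : ℚ) := by
  have hx : x ∈ Submodule.span ℚ weylMonomials := span_weylMonomials ▸ Submodule.mem_top
  induction hx using Submodule.span_induction with
  | mem _ hx =>
    obtain ⟨⟨i, j⟩, rfl⟩ := hx
    refine ⟨if (i - j : ℤ) = k then descPochhammer ℚ j else 0, fun n => ?_⟩
    rw [toEndL_monomial_T, T, AddMonoidAlgebra.smul_single, AddMonoidAlgebra.coeff_single,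
      Finsupp.single_apply]
    simp only [add_right_inj]
    split_ifs <;> simp
  | zero => exact ⟨0, fun n => by simp⟩
  | add x y _ _ hx hy =>
    obtain ⟨p, hp⟩ := hx
    obtain ⟨q, hq⟩ := hy
    exact ⟨p + q, fun n => by simp [hp, hq]⟩
  | smul c x _ hx =>
    obtain ⟨p, hp⟩ := hx
    exact ⟨c • p, fun n => by simp [toEndL_smul, hp]⟩

theorem eq_zero_of_toEndL_natCast_T {x : WeylL} (hx : ∀ m : ℕ, toEndL x (T m) = 0) : x = 0 := by
  refine toEndL_injective (laurentBasis.ext fun n => LaurentPolynomial.ext fun k => ?_)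
  obtain ⟨p, hp⟩ := exists_polynomial_coeff_toEndL_T x (k - n)
  have hp0 : p = 0 := by
    refine Polynomial.eq_zero_of_infinite_isRoot p
      (Set.infinite_of_injective_forall_mem Nat.cast_injective fun m : ℕ => ?_)
    simpa [hx] using (hp m).symm
  simpa [hp0] using hp n

theorem isRightRegular_of_T_natCast_mem_range {a : WeylL}
    (ha : ∀ m : ℕ, T m ∈ LinearMap.range (toEndL a)) : IsRightRegular a :=
  isRightRegular_of_non_zero_divisor a fun x hx => eq_zero_of_toEndL_natCast_T fun m => by
    obtain ⟨f, hf⟩ := ha m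
    rw [← hf, ← toEndL_mul_apply, hx, map_zero, LinearMap.zero_apply]

theorem toEndL_tL_mul_dL_add_one_T (n : ℤ) :
    toEndL (tL * dL + 1) (T n) = ((n : ℚ) + 1) • T n := by
  rw [← dL_mul_tL, toEndL_mul_apply, toEndL_tL, toEndL_dL, LinearMap.mulLeft_apply, ← T_add,
    lderiv_T, add_sub_cancel_left, add_comm (1 : ℤ), Int.cast_add, Int.cast_one]

theorem isRightRegular_dL : IsRightRegular dL :=
  isRightRegular_of_T_natCast_mem_range fun m =>
    ⟨((m : ℚ) + 1)⁻¹ • T (m + 1), by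
      rw [map_smul, toEndL_dL, lderiv_T, smul_smul]
      push_cast
      rw [inv_mul_cancel₀ (by positivity), one_smul, add_sub_cancel_right]⟩

theorem isRightRegular_tL_mul_dL_add_one : IsRightRegular (tL * dL + 1) :=
  isRightRegular_of_T_natCast_mem_range fun m =>
    ⟨((m : ℚ) + 1)⁻¹ • T m, by
      rw [map_smul, toEndL_tL_mul_dL_add_one_T, smul_smul]
      push_cast
      rw [inv_mul_cancel₀ (by positivity), one_smul]⟩

def evalAt (f : LaurentPolynomial ℚ) : WeylL →ₗ[ℚ] LaurentPolynomial ℚ where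
  toFun P := toEndL P f
  map_add' P Q := by rw [map_add, LinearMap.add_apply]
  map_smul' c P := by rw [toEndL_smul]; rfl

theorem evalAt_apply (f : LaurentPolynomial ℚ) (P : WeylL) : evalAt f P = toEndL P f := rfl

def polynomialSection : LaurentPolynomial ℚ →ₗ[ℚ] WeylL :=
  laurentBasis.constr ℚ fun
    | .ofNat k => tL ^ k
    | .negSucc _ => 0

theorem evalAt_one_monomial (i j : ℕ) :
    evalAt 1 (tL ^ i * dL ^ j) = if j = 0 then T i else 0 := by
  rw [evalAt_apply, ← T_zero, toEndL_monomial_T]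
  rcases j with _ | j <;> simp

theorem exact_mul_dL_evalAt_one : Function.Exact (· * dL) (evalAt 1) := by
  refine exact_mul_right_of_sub_mem_range span_weylMonomials polynomialSection
    (fun y => by rw [evalAt_apply, toEndL_mul_apply, toEndL_dL, ← T_zero, lderiv_T]; simp) ?_
  rintro _ ⟨⟨i, j⟩, rfl⟩
  rcases j with _ | j
  · rw [evalAt_one_monomial, if_pos rfl, ← laurentBasis_apply, polynomialSection,
      Module.Basis.constr_basis]
    simp
  · rw [evalAt_one_monomial, if_neg j.succ_ne_zero, map_zero, sub_zero]
    exact ⟨tL ^ i * dL ^ j, by rw [LinearMap.mulRight_apply, mul_assoc, ← pow_succ]⟩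

def laurentSection : LaurentPolynomial ℚ →ₗ[ℚ] WeylL :=
  laurentBasis.constr ℚ fun
    | .ofNat k => tL ^ (k + 1)
    | .negSucc m => ((descPochhammer ℚ m).eval (-1))⁻¹ • dL ^ m

theorem evalAt_T_neg_one_tL_pow (i : ℕ) : evalAt (T (-1)) (tL ^ i) = T (i - 1) := by
  rw [evalAt_apply, toEndL_tL_pow, LinearMap.mulLeft_apply, ← T_add, Int.add_neg_one]

theorem evalAt_T_neg_one_dL_pow (j : ℕ) :
    evalAt (T (-1)) (dL ^ j) = (descPochhammer ℚ j).eval (-1) • T (Int.negSucc j) := by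
  rw [evalAt_apply, toEndL_dL_pow_T, Int.negSucc_eq]
  push_cast
  ring_nf

theorem laurentSection_T_natCast (k : ℕ) : laurentSection (T k) = tL ^ (k + 1) :=
  laurentBasis.constr_basis ℚ _ _

theorem laurentSection_T_negSucc (m : ℕ) :
    laurentSection (T (Int.negSucc m)) = ((descPochhammer ℚ m).eval (-1))⁻¹ • dL ^ m :=
  laurentBasis.constr_basis ℚ _ _

theorem laurentSection_evalAt_dL_pow (j : ℕ) :
    laurentSection (evalAt (T (-1)) (dL ^ j)) = dL ^ j := by
  rw [evalAt_T_neg_one_dL_pow, map_smul, laurentSection_T_negSucc, smul_smul,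
    mul_inv_cancel₀ (descPochhammer_eval_neg_one_ne_zero j), one_smul]

theorem laurentSection_evalAt_tL_pow (i : ℕ) :
    laurentSection (evalAt (T (-1)) (tL ^ i)) = tL ^ i := by
  rw [evalAt_T_neg_one_tL_pow]
  rcases i with _ | i
  · rw [show ((0 : ℕ) : ℤ) - 1 = Int.negSucc 0 from rfl, laurentSection_T_negSucc]
    simp
  · rw [Nat.cast_succ, add_sub_cancel_right, laurentSection_T_natCast]

theorem evalAt_laurentSection (f : LaurentPolynomial ℚ) :
    evalAt (T (-1)) (laurentSection f) = f := by
  suffices (evalAt (T (-1))) ∘ₗ laurentSection = LinearMap.id from LinearMap.congr_fun this f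
  refine laurentBasis.ext fun n => ?_
  rcases n with k | m
  · simpa [laurentSection_T_natCast] using evalAt_T_neg_one_tL_pow (k + 1)
  · simp [laurentSection_T_negSucc, evalAt_T_neg_one_dL_pow, descPochhammer_eval_neg_one_ne_zero]

theorem evalAt_T_neg_one_mul_tL_mul_dL_add_one (y : WeylL) :
    evalAt (T (-1)) (y * (tL * dL + 1)) = 0 := by
  rw [evalAt_apply, toEndL_mul_apply, toEndL_tL_mul_dL_add_one_T]
  simp

theorem monomial_sub_laurentSection_mem (i j : ℕ) :
    tL ^ i * dL ^ j - laurentSection (evalAt (T (-1)) (tL ^ i * dL ^ j)) ∈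
      LinearMap.range (LinearMap.mulRight ℚ (tL * dL + 1)) := by
  induction j generalizing i with
  | zero => simp [laurentSection_evalAt_tL_pow]
  | succ j ih =>
    rcases i with _ | i
    · simp [laurentSection_evalAt_dL_pow]
    set m := tL ^ i * dL ^ j
    have hm : tL ^ (i + 1) * dL ^ (j + 1) = m * (tL * dL + 1) - (j + 1) • m := by
      rw [← dL_mul_tL, ← mul_assoc, mul_assoc (tL ^ i), ← pow_succ, mul_assoc,
        pow_succ_mul_of_mul_eq dL_mul_tL, mul_add, ← mul_assoc, ← pow_succ, mul_smul_comm,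
        add_sub_cancel_right]
    have hsub : m * (tL * dL + 1) - (j + 1) • m - laurentSection (evalAt (T (-1))
        (m * (tL * dL + 1) - (j + 1) • m)) =
        m * (tL * dL + 1) - (j + 1) • (m - laurentSection (evalAt (T (-1)) m)) := by
      rw [map_sub, map_nsmul, evalAt_T_neg_one_mul_tL_mul_dL_add_one, zero_sub, map_neg, map_nsmul,
        smul_sub]
      abel
    rw [hm, hsub]
    exact sub_mem ⟨m, rfl⟩ (nsmul_mem (ih i) _)

theorem exact_mul_tL_mul_dL_add_one_evalAt_T_neg_one :
    Function.Exact (· * (tL * dL + 1)) (evalAt (T (-1))) :=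
  exact_mul_right_of_sub_mem_range span_weylMonomials laurentSection
    evalAt_T_neg_one_mul_tL_mul_dL_add_one fun _ ⟨⟨i, j⟩, hij⟩ =>
      hij ▸ monomial_sub_laurentSection_mem i j

theorem surjective_evalAt_T_neg_one : Function.Surjective (evalAt (T (-1))) :=
  fun f => ⟨laurentSection f, evalAt_laurentSection f⟩

theorem toEndL_mul_tL_T_neg_one (P : WeylL) : toEndL (P * tL) (T (-1)) = toEndL P 1 := by
  rw [toEndL_mul_apply, toEndL_tL, LinearMap.mulLeft_apply, ← T_add, add_neg_cancel, T_zero]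

theorem range_evalAt_one : Set.range (evalAt 1) = Set.range Polynomial.toLaurent := by
  refine subset_antisymm ?_ ?_
  · suffices LinearMap.range (evalAt 1) ≤ LinearMap.range Polynomial.toLaurentAlg.toLinearMap from
      this
    rw [LinearMap.range_eq_map, ← span_weylMonomials, Submodule.map_span_le]
    rintro _ ⟨⟨i, j⟩, rfl⟩
    rw [evalAt_one_monomial]
    split_ifs
    · exact ⟨Polynomial.X ^ i, Polynomial.toLaurent_X_pow i⟩
    · exact zero_mem _
  · rintro _ ⟨p, rfl⟩
    induction p using Polynomial.induction_on' with
    | add p q hp hq => rw [map_add]; exact (LinearMap.range (evalAt 1)).add_mem hp hq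
    | monomial n a =>
      refine ⟨a • tL ^ n, ?_⟩
      rw [map_smul, evalAt_apply, toEndL_tL_pow, LinearMap.mulLeft_apply, mul_one,
        Polynomial.toLaurent_C_mul_T, smul_eq_C_mul]

def polynomialSubmodule : Submodule WeylL (LaurentPolynomial ℚ) := Submodule.span WeylL {1}

theorem coe_polynomialSubmodule : (polynomialSubmodule : Set (LaurentPolynomial ℚ)) =
    Set.range (evalAt 1) := by
  ext f
  exact Submodule.mem_span_singleton

theorem ker_mkQ_comp_toSpanSingleton_T_neg_one :
    LinearMap.ker (polynomialSubmodule.mkQ ∘ₗ LinearMap.toSpanSingleton WeylL _ (T (-1))) =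
      Submodule.span WeylL {tL} := by
  refine le_antisymm (fun P hP => ?_) ?_
  · rw [LinearMap.mem_ker, LinearMap.comp_apply, Submodule.mkQ_apply,
      Submodule.Quotient.mk_eq_zero] at hP
    obtain ⟨y, hy⟩ : ∃ y, toEndL y 1 = toEndL P (T (-1)) := Submodule.mem_span_singleton.mp hP
    obtain ⟨z, hz : z * (tL * dL + 1) = P - y * tL⟩ :
        P - y * tL ∈ Set.range (· * (tL * dL + 1)) := by
      refine (exact_mul_tL_mul_dL_add_one_evalAt_T_neg_one _).mp ?_
      rw [map_sub, evalAt_apply, evalAt_apply, toEndL_mul_tL_T_neg_one, hy, sub_self]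
    refine Submodule.mem_span_singleton.mpr ⟨y + z * dL, ?_⟩
    rw [smul_eq_mul, add_mul, mul_assoc, dL_mul_tL, hz, add_sub_cancel]
  · rw [Submodule.span_le, Set.singleton_subset_iff]
    show polynomialSubmodule.mkQ (toEndL tL (T (-1))) = 0
    rw [← one_mul tL, toEndL_mul_tL_T_neg_one, Submodule.mkQ_apply, Submodule.Quotient.mk_eq_zero]
    exact Submodule.subset_span rfl

/-- Let `R = ℚ⟨t,∂⟩/(∂t − t∂ − 1)` be the first Weyl algebra, acting on `ℚ[t] ⊆ ℚ[t,t⁻¹]`.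
There is a commutative diagram of left `R`-module maps with exact rows
`0 → R →(·∂) R →(P ↦ P(1)) ℚ[t] → 0` and
`0 → R →(·(t∂+1)) R →(P ↦ P(1/t)) ℚ[t,t⁻¹] → 0`,
the vertical maps being the identity, right multiplication by `t`, and the inclusion
`ℚ[t] ⊆ ℚ[t,t⁻¹]`; by the snake lemma one obtains an isomorphism of left `R`-modules
`R/R·t ≅ ℚ[t,t⁻¹]/ℚ[t]`. -/
theorem stmt12 :
    ∃ N : Submodule WeylL (LaurentPolynomial ℚ),
      (N : Set (LaurentPolynomial ℚ)) = Set.range (Polynomial.toLaurent (R := ℚ)) ∧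
      -- first row: 0 → R →(·∂) R →(P ↦ P(1)) ℚ[t] → 0 is exact
      Function.Injective (fun P : WeylL => P * dL) ∧
      Set.range (fun P : WeylL => toEndL P (1 : LaurentPolynomial ℚ)) = (N : Set _) ∧
      Function.Exact (fun P : WeylL => P * dL)
        (fun P : WeylL => toEndL P (1 : LaurentPolynomial ℚ)) ∧
      -- second row: 0 → R →(·(t∂+1)) R →(P ↦ P(1/t)) ℚ[t,t⁻¹] → 0 is exact
      Function.Injective (fun P : WeylL => P * (tL * dL + 1)) ∧
      Function.Surjective (fun P : WeylL => toEndL P (T (-1))) ∧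
      Function.Exact (fun P : WeylL => P * (tL * dL + 1))
        (fun P : WeylL => toEndL P (T (-1))) ∧
      -- the two squares of the diagram commute
      (∀ P : WeylL, (P * dL) * tL = P * (tL * dL + 1)) ∧
      (∀ P : WeylL, toEndL (P * tL) (T (-1)) = toEndL P (1 : LaurentPolynomial ℚ)) ∧
      -- snake lemma conclusion: R/R·t ≅ ℚ[t,t⁻¹]/ℚ[t] as left R-modules
      Nonempty ((WeylL ⧸ Submodule.span WeylL {tL}) ≃ₗ[WeylL]
        (LaurentPolynomial ℚ ⧸ N)) := by
  refine ⟨polynomialSubmodule, coe_polynomialSubmodule.trans range_evalAt_one, isRightRegular_dL,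
    coe_polynomialSubmodule.symm, exact_mul_dL_evalAt_one, isRightRegular_tL_mul_dL_add_one,
    surjective_evalAt_T_neg_one, exact_mul_tL_mul_dL_add_one_evalAt_T_neg_one,
    fun P => by rw [mul_assoc, dL_mul_tL], toEndL_mul_tL_T_neg_one, ⟨?_⟩⟩
  exact (Submodule.quotEquivOfEq _ _ ker_mkQ_comp_toSpanSingleton_T_neg_one.symm).trans
    (LinearMap.quotKerEquivOfSurjective _
      ((Submodule.mkQ_surjective _).comp surjective_evalAt_T_neg_one))

end
end
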